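/- arXiv:0906.3723 — 2 statements merged into one kernel-verified Lean document; each statement's English description precedes it below -/
import Mathlib

section
/- Let M be a gridding matrix and let A be an antichain of permutations such that infinitely many elements of A are strongly uniquely M-griddable. Then for every gridding matrix N that is equivalent to M under some grid mapping, the grid class Grid(N) is not partially well-ordered. -/
/-! Core definitions: finite permutations, pattern containment, permutation
classes, partial well-order, monotone classes, simple permutations,
direct/skew sums, grid classes and the graph of a gridding matrix. -/

/-- A finite permutation: a length `n` together with a bijection of `Fin n`. -/
abbrev Perm' : Type := Σ n : ℕ, Equiv.Perm (Fin n)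

namespace Perm'

/-- Pattern containment: `σ.Le π` means that `σ` is contained in `π`,
i.e. some subsequence of `π` is order isomorphic to `σ`. -/
def Le (σ π : Perm') : Prop :=
  ∃ f : Fin σ.1 → Fin π.1, StrictMono f ∧
    ∀ a b : Fin σ.1, (σ.2 a < σ.2 b ↔ π.2 (f a) < π.2 (f b))

/-- The inverse of a permutation. -/
def inverse (π : Perm') : Perm' := ⟨π.1, π.2.symm⟩

/-- The reverse of a permutation: `r(π)(i) = π(k+1-i)`. -/
def reverse (π : Perm') : Perm' := ⟨π.1, Fin.revPerm.trans π.2⟩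

/-- The complement of a permutation: `c(π)(i) = k+1-π(i)`. -/
def complement (π : Perm') : Perm' := ⟨π.1, π.2.trans Fin.revPerm⟩

/-- The direct sum `σ ⊕ τ` of two permutations. -/
def dsum (σ τ : Perm') : Perm' :=
  ⟨σ.1 + τ.1, finSumFinEquiv.symm.trans ((Equiv.sumCongr σ.2 τ.2).trans finSumFinEquiv)⟩

/-- The skew sum `σ ⊖ τ` of two permutations. -/
def skewSum (σ τ : Perm') : Perm' :=
  ⟨σ.1 + τ.1, finSumFinEquiv.symm.trans ((Equiv.sumCongr σ.2 τ.2).trans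
    ((Equiv.sumComm (Fin σ.1) (Fin τ.1)).trans
      (finSumFinEquiv.trans (finCongr (Nat.add_comm τ.1 σ.1)))))⟩

end Perm'

/-- The empty permutation. -/
def emptyPerm : Perm' := ⟨0, 1⟩

/-- The permutation 12. -/
def perm12 : Perm' := ⟨2, 1⟩

/-- The permutation 21. -/
def perm21 : Perm' := ⟨2, Equiv.swap 0 1⟩

/-- A permutation class: a set of permutations closed downward under containment. -/
def IsPermClass (C : Set Perm') : Prop := ∀ π ∈ C, ∀ σ : Perm', σ.Le π → σ ∈ C

/-- An antichain: a set of pairwise incomparable permutations. -/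
def IsPermAntichain (A : Set Perm') : Prop := ∀ α ∈ A, ∀ β ∈ A, α ≠ β → ¬ α.Le β

/-- A set of permutations is partially well-ordered if it contains no infinite
antichain. (Note that pairwise incomparability forces injectivity of `g`.) -/
def IsPwo (C : Set Perm') : Prop :=
  ¬ ∃ g : ℕ → Perm', (∀ i, g i ∈ C) ∧ ∀ i j : ℕ, i ≠ j → ¬ (g i).Le (g j)

/-- `Av(21)`: the class of increasing permutations. -/
def Av21 : Set Perm' := {π | ∀ a b : Fin π.1, a ≤ b → π.2 a ≤ π.2 b}

/-- `Av(12)`: the class of decreasing permutations. -/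
def Av12 : Set Perm' := {π | ∀ a b : Fin π.1, a ≤ b → π.2 b ≤ π.2 a}

/-- The monotone classes. -/
def IsMonotoneClass (C : Set Perm') : Prop := C = Av21 ∨ C = Av12

/-- A permutation is simple if it has no interval of size strictly between 1 and
its length: whenever the set of positions `[a,b]` is mapped onto a contiguous
set of values, either `a = b` or `[a,b]` is everything. -/
def IsSimple (π : Perm') : Prop :=
  ∀ a b : Fin π.1, a ≤ b →
    (∃ c : ℕ, ∀ i : Fin π.1,
      ((a ≤ i ∧ i ≤ b) ↔ (c ≤ (π.2 i : ℕ) ∧ (π.2 i : ℕ) ≤ c + ((b : ℕ) - (a : ℕ))))) →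
    (a = b ∨ (b : ℕ) - (a : ℕ) + 1 = π.1)

/-- The class `⊕21` of all direct sums of patterns of `21`. -/
def sumClosure21 : Set Perm' :=
  {π | ∃ L : List Perm', (∀ α ∈ L, α.Le perm21) ∧ π = L.foldr Perm'.dsum emptyPerm}

/-- The class `⊖12` of all skew sums of patterns of `12`. -/
def skewClosure12 : Set Perm' :=
  {π | ∃ L : List Perm', (∀ α ∈ L, α.Le perm12) ∧ π = L.foldr Perm'.skewSum emptyPerm}

/-- The set of points of `π` indexed by `S` is order isomorphic to `τ`. -/
def IsPatternOf (π : Perm') (S : Set (Fin π.1)) (τ : Perm') : Prop :=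
  ∃ g : Fin τ.1 → Fin π.1, StrictMono g ∧ (∀ a, g a ∈ S) ∧ (∀ i ∈ S, ∃ a, g a = i) ∧
    ∀ a b : Fin τ.1, (τ.2 a < τ.2 b ↔ π.2 (g a) < π.2 (g b))

/-- A gridding of a permutation `π` into an `m × n` grid, recorded as the induced
cell assignment `κ` of the points of `π`: columns are weakly increasing in
position and rows weakly increasing in value.  (This is equivalent to recording
the `m-1` vertical and `n-1` horizontal dividing lines.) -/
def IsGridding {m n : ℕ} (π : Perm') (κ : Fin π.1 → Fin m × Fin n) : Prop :=
  (∀ i i' : Fin π.1, i ≤ i' → (κ i).1 ≤ (κ i').1) ∧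
  (∀ i i' : Fin π.1, π.2 i ≤ π.2 i' → (κ i).2 ≤ (κ i').2)

/-- An `M`-gridding: a gridding in which the content of each cell `(s,t)` is
empty or order isomorphic to a member of `M s t`. -/
def IsMGridding {m n : ℕ} (M : Fin m → Fin n → Set Perm') (π : Perm')
    (κ : Fin π.1 → Fin m × Fin n) : Prop :=
  IsGridding π κ ∧
  ∀ s : Fin m, ∀ t : Fin n,
    (∀ i, κ i ≠ (s, t)) ∨ ∃ τ ∈ M s t, IsPatternOf π {i | κ i = (s, t)} τ

/-- `π` is `M`-griddable. -/
def Griddable {m n : ℕ} (M : Fin m → Fin n → Set Perm') (π : Perm') : Prop :=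
  ∃ κ, IsMGridding M π κ

/-- The grid class of `M`: all `M`-griddable permutations. -/
def GridClass {m n : ℕ} (M : Fin m → Fin n → Set Perm') : Set Perm' :=
  {π | Griddable M π}

/-- A gridding matrix: every entry is an infinite permutation class or empty. -/
def IsGriddingMatrix {m n : ℕ} (M : Fin m → Fin n → Set Perm') : Prop :=
  ∀ i j, (IsPermClass (M i j) ∧ (M i j).Infinite) ∨ M i j = ∅

/-- The non-empty cells of `M`: the vertices of the graph of `M`. -/
def GridCell {m n : ℕ} (M : Fin m → Fin n → Set Perm') : Type :=
  {p : Fin m × Fin n // M p.1 p.2 ≠ ∅}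

/-- Adjacency for the graph of `M`: two cells sharing a row or a column with
only empty cells in between. -/
def GridAdj {m n : ℕ} (M : Fin m → Fin n → Set Perm') (p q : Fin m × Fin n) : Prop :=
  p ≠ q ∧
  ((p.2 = q.2 ∧ ∀ i : Fin m, min p.1 q.1 < i → i < max p.1 q.1 → M i p.2 = ∅) ∨
   (p.1 = q.1 ∧ ∀ j : Fin n, min p.2 q.2 < j → j < max p.2 q.2 → M p.1 j = ∅))

/-- The graph `G_M` of a gridding matrix `M`. -/
def gridGraph {m n : ℕ} (M : Fin m → Fin n → Set Perm') : SimpleGraph (GridCell M) where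
  Adj p q := GridAdj M p.1 q.1
  symm := by
    constructor
    rintro ⟨p, hp⟩ ⟨q, hq⟩ ⟨hne, h⟩
    refine ⟨Ne.symm hne, ?_⟩
    rcases h with ⟨h2, hb⟩ | ⟨h1, hb⟩
    · exact Or.inl ⟨h2.symm, fun i hi hi' => by
        rw [← h2]; exact hb i (by rwa [min_comm]) (by rwa [max_comm])⟩
    · exact Or.inr ⟨h1.symm, fun j hj hj' => by
        rw [← h1]; exact hb j (by rwa [min_comm]) (by rwa [max_comm])⟩
  loopless := by constructor; rintro ⟨p, hp⟩ ⟨hne, h⟩; exact hne rfl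

/-- A class is monotone griddable if it is griddable by some matrix all of whose
entries are monotone classes or empty. -/
def MonotoneGriddable (C : Set Perm') : Prop :=
  ∃ (m n : ℕ) (M : Fin m → Fin n → Set Perm'),
    (∀ i j, IsMonotoneClass (M i j) ∨ M i j = ∅) ∧ ∀ π ∈ C, Griddable M π

/-! Gridded permutations (a permutation together with a fixed gridding) and
grid mappings: compositions of the grid inverse, column reverses, row
complements and row/column permutations, acting both on gridding matrices and
on gridded permutations (together with the induced correspondence of points). -/

/-- An `m × n` gridded permutation. -/
structure GriddedPerm (m n : ℕ) where
  len : ℕ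
  e : Equiv.Perm (Fin len)
  κ : Fin len → Fin m × Fin n
  col_mono : ∀ i i' : Fin len, i ≤ i' → (κ i).1 ≤ (κ i').1
  row_mono : ∀ i i' : Fin len, e i ≤ e i' → (κ i).2 ≤ (κ i').2

namespace GriddedPerm

/-- The underlying permutation of a gridded permutation. -/
def toPerm {m n : ℕ} (g : GriddedPerm m n) : Perm' := ⟨g.len, g.e⟩

/-- The gridded permutation `g` is `M`-gridded. -/
def InMatrix {m n : ℕ} (M : Fin m → Fin n → Set Perm') (g : GriddedPerm m n) : Prop :=
  IsMGridding M g.toPerm g.κ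

end GriddedPerm

/-- Gridded containment `α ≤ π` of gridded permutations: a pattern embedding
respecting the cells of the griddings. -/
def GriddedLe {m n : ℕ} (α π : GriddedPerm m n) : Prop :=
  ∃ f : Fin α.len → Fin π.len, StrictMono f ∧
    (∀ a b, (α.e a < α.e b ↔ π.e (f a) < π.e (f b))) ∧
    ∀ a, π.κ (f a) = α.κ a

/-- The data of a mapping of `m × n` grids to `m' × n'` grids: an action on
gridding matrices, an action on gridded permutations, and the induced
correspondence on points. -/
structure GMap (m n m' n' : ℕ) where
  onMat : (Fin m → Fin n → Set Perm') → (Fin m' → Fin n' → Set Perm')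
  onGrid : GriddedPerm m n → GriddedPerm m' n'
  corr : (g : GriddedPerm m n) → Fin g.len → Fin (onGrid g).len

/-- Composition of grid maps. -/
def GMap.comp {m n m' n' m'' n'' : ℕ} (F : GMap m n m' n') (G : GMap m' n' m'' n'') :
    GMap m n m'' n'' where
  onMat := fun M => G.onMat (F.onMat M)
  onGrid := fun g => G.onGrid (F.onGrid g)
  corr := fun g i => G.corr (F.onGrid g) (F.corr g i)

/-- `h` reverses the order of the set `S` and fixes everything outside it. -/
def BlockRev {l : ℕ} (S : Set (Fin l)) (h : Equiv.Perm (Fin l)) : Prop :=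
  (∀ p, p ∉ S → h p = p) ∧ (∀ p, p ∈ S → h p ∈ S) ∧
  ∀ p ∈ S, ∀ q ∈ S, (p < q ↔ h q < h p)

/-- The grid inverse on matrices: `(φ M) i j = (M j i)⁻¹`. -/
def matInverse {m n : ℕ} (M : Fin m → Fin n → Set Perm') : Fin n → Fin m → Set Perm' :=
  fun i j => Perm'.inverse '' M j i

/-- Column reverse on matrices. -/
def matColRev {m n : ℕ} (s : Fin m) (M : Fin m → Fin n → Set Perm') :
    Fin m → Fin n → Set Perm' :=
  fun i j => if i = s then Perm'.reverse '' M i j else M i j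

/-- Row complement on matrices. -/
def matRowCompl {m n : ℕ} (t : Fin n) (M : Fin m → Fin n → Set Perm') :
    Fin m → Fin n → Set Perm' :=
  fun i j => if j = t then Perm'.complement '' M i j else M i j

/-- Column permutation on matrices: `(μ M) i j = M (μ i) j`. -/
def matColPerm {m n : ℕ} (μ : Equiv.Perm (Fin m)) (M : Fin m → Fin n → Set Perm') :
    Fin m → Fin n → Set Perm' := fun i j => M (μ i) j

/-- Row permutation on matrices: `(ν M) i j = M i (ν j)`. -/
def matRowPerm {m n : ℕ} (ν : Equiv.Perm (Fin n)) (M : Fin m → Fin n → Set Perm') :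
    Fin m → Fin n → Set Perm' := fun i j => M i (ν j)

/-- The grid inverse on gridded permutations: it takes the inverse permutation
and interchanges the vertical and horizontal dividers, so the point at
position `v` of the image is the (inverted) point of value `v`. -/
def SpecInverse {m n : ℕ} (g : GriddedPerm m n) (out : GriddedPerm n m)
    (c : Fin g.len → Fin out.len) : Prop :=
  ∃ hl : g.len = out.len,
    (∀ i : Fin g.len, c i = Fin.cast hl (g.e i)) ∧
    (∀ v : Fin out.len, (out.e v : ℕ) = (g.e.symm (Fin.cast hl.symm v) : ℕ)) ∧
    (∀ v : Fin out.len,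
      out.κ v = ((g.κ (g.e.symm (Fin.cast hl.symm v))).2,
                 (g.κ (g.e.symm (Fin.cast hl.symm v))).1))

/-- Column reverse on gridded permutations: the left-to-right order of the
points of column `s` is reversed (via the involution `h`). -/
def SpecColRev {m n : ℕ} (s : Fin m) (g out : GriddedPerm m n)
    (c : Fin g.len → Fin out.len) : Prop :=
  ∃ (hl : g.len = out.len) (h : Equiv.Perm (Fin g.len)),
    BlockRev {p : Fin g.len | (g.κ p).1 = s} h ∧
    (∀ p : Fin g.len, c p = Fin.cast hl (h.symm p)) ∧
    (∀ i : Fin out.len, (out.e i : ℕ) = (g.e (h (Fin.cast hl.symm i)) : ℕ)) ∧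
    (∀ i : Fin out.len, out.κ i = g.κ (h (Fin.cast hl.symm i)))

/-- Row complement on gridded permutations: the values of the points of row `t`
are reflected top-to-bottom (via the involution `h` on values). -/
def SpecRowCompl {m n : ℕ} (t : Fin n) (g out : GriddedPerm m n)
    (c : Fin g.len → Fin out.len) : Prop :=
  ∃ (hl : g.len = out.len) (h : Equiv.Perm (Fin g.len)),
    BlockRev {v : Fin g.len | (g.κ (g.e.symm v)).2 = t} h ∧
    (∀ p : Fin g.len, c p = Fin.cast hl p) ∧
    (∀ i : Fin out.len, (out.e i : ℕ) = (h (g.e (Fin.cast hl.symm i)) : ℕ)) ∧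
    (∀ i : Fin out.len, out.κ i = g.κ (Fin.cast hl.symm i))

/-- Column permutation on gridded permutations: the column blocks of points are
rearranged according to `μ`; `h i` is the old position of the point at new
position `i`, so new positions are sorted by new column and then by old
position. -/
def SpecColPerm {m n : ℕ} (μ : Equiv.Perm (Fin m)) (g out : GriddedPerm m n)
    (c : Fin g.len → Fin out.len) : Prop :=
  ∃ (hl : g.len = out.len) (h : Equiv.Perm (Fin g.len)),
    (∀ p q : Fin g.len, (p < q ↔
      (μ.symm (g.κ (h p)).1 < μ.symm (g.κ (h q)).1 ∨
        ((g.κ (h p)).1 = (g.κ (h q)).1 ∧ h p < h q)))) ∧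
    (∀ p : Fin g.len, c p = Fin.cast hl (h.symm p)) ∧
    (∀ i : Fin out.len, (out.e i : ℕ) = (g.e (h (Fin.cast hl.symm i)) : ℕ)) ∧
    (∀ i : Fin out.len, out.κ i =
      (μ.symm (g.κ (h (Fin.cast hl.symm i))).1, (g.κ (h (Fin.cast hl.symm i))).2))

/-- Row permutation on gridded permutations: the row blocks of points are
rearranged according to `ν`; `h v` is the new value of the point of old value
`v`, so new values are sorted by new row and then by old value. -/
def SpecRowPerm {m n : ℕ} (ν : Equiv.Perm (Fin n)) (g out : GriddedPerm m n)
    (c : Fin g.len → Fin out.len) : Prop :=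
  ∃ (hl : g.len = out.len) (h : Equiv.Perm (Fin g.len)),
    (∀ v w : Fin g.len, (h v < h w ↔
      (ν.symm (g.κ (g.e.symm v)).2 < ν.symm (g.κ (g.e.symm w)).2 ∨
        ((g.κ (g.e.symm v)).2 = (g.κ (g.e.symm w)).2 ∧ v < w)))) ∧
    (∀ p : Fin g.len, c p = Fin.cast hl p) ∧
    (∀ i : Fin out.len, (out.e i : ℕ) = (h (g.e (Fin.cast hl.symm i)) : ℕ)) ∧
    (∀ i : Fin out.len, out.κ i =
      ((g.κ (Fin.cast hl.symm i)).1, ν.symm (g.κ (Fin.cast hl.symm i)).2))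

/-- A grid mapping: any composition of the grid inverse, column reverses, row
complements, and row and column permutations. -/
inductive IsGridMapping : {m n m' n' : ℕ} → GMap m n m' n' → Prop
  | inverse {m n : ℕ} (F : GMap m n n m)
      (hM : ∀ M, F.onMat M = matInverse M)
      (hG : ∀ g, SpecInverse g (F.onGrid g) (F.corr g)) : IsGridMapping F
  | colRev {m n : ℕ} (s : Fin m) (F : GMap m n m n)
      (hM : ∀ M, F.onMat M = matColRev s M)
      (hG : ∀ g, SpecColRev s g (F.onGrid g) (F.corr g)) : IsGridMapping F
  | rowCompl {m n : ℕ} (t : Fin n) (F : GMap m n m n)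
      (hM : ∀ M, F.onMat M = matRowCompl t M)
      (hG : ∀ g, SpecRowCompl t g (F.onGrid g) (F.corr g)) : IsGridMapping F
  | colPerm {m n : ℕ} (μ : Equiv.Perm (Fin m)) (F : GMap m n m n)
      (hM : ∀ M, F.onMat M = matColPerm μ M)
      (hG : ∀ g, SpecColPerm μ g (F.onGrid g) (F.corr g)) : IsGridMapping F
  | rowPerm {m n : ℕ} (ν : Equiv.Perm (Fin n)) (F : GMap m n m n)
      (hM : ∀ M, F.onMat M = matRowPerm ν M)
      (hG : ∀ g, SpecRowPerm ν g (F.onGrid g) (F.corr g)) : IsGridMapping F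
  | comp {m n m' n' m'' n'' : ℕ} (F : GMap m n m' n') (G : GMap m' n' m'' n'')
      (hF : IsGridMapping F) (hG : IsGridMapping G) : IsGridMapping (F.comp G)

/-- `κ` is the unique `M`-gridding of `π`. -/
def UniqueMGridding {m n : ℕ} (M : Fin m → Fin n → Set Perm') (π : Perm')
    (κ : Fin π.1 → Fin m × Fin n) : Prop :=
  IsMGridding M π κ ∧ ∀ κ', IsMGridding M π κ' → κ' = κ

/-- `π` is strongly uniquely `M`-griddable: it has a unique `M`-gridding and,
for every grid mapping `f`, the image gridded permutation carries the unique
`f(M)`-gridding of its underlying permutation. -/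
def StronglyUniquelyGriddable {m n : ℕ} (M : Fin m → Fin n → Set Perm') (π : Perm') : Prop :=
  ∃ g : GriddedPerm m n, g.toPerm = π ∧
    UniqueMGridding M g.toPerm g.κ ∧
    ∀ (m' n' : ℕ) (F : GMap m n m' n'), IsGridMapping F →
      UniqueMGridding (F.onMat M) (F.onGrid g).toPerm (F.onGrid g).κ


/-!
Choose infinitely many members `α_i` of the antichain together with strongly unique
`M`-griddings `g_i`, and push them through the grid mapping `F` with `F(M) = N`. Each image
`F(g_i)` carries the unique `N`-gridding of its underlying permutation `β_i`. If `β_i ≤ β_j`,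
restricting the gridding of `β_j` along an embedding gives an `N`-gridding of `β_i` (the cells
of `N` are permutation classes), which by uniqueness is that of `F(g_i)`, so `F(g_i)` embeds
into `F(g_j)` as a gridded permutation. Grid mappings reflect gridded containment, because the
cells and the relative order of any two points of `g` can be read off from their images in
`F(g)`. Hence `α_i ≤ α_j`, which is impossible, and the `β_i` form an infinite antichain in
`Grid(N)`.
-/

theorem cmp_eq_cmp_of_lt_iff {α β : Type*} [LinearOrder α] [LinearOrder β] {a b : α} {a' b' : β}
    (h₁ : a < b ↔ a' < b') (h₂ : b < a ↔ b' < a') : cmp a b = cmp a' b' := by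
  simp only [cmp, cmpUsing, h₁, h₂]

theorem cmp_eq_cmp_of_monotone_of_ne {α β : Type*} [LinearOrder α] [LinearOrder β] {f : α → β}
    (hf : Monotone f) {a b : α} (h : f a ≠ f b) : cmp a b = cmp (f a) (f b) :=
  cmp_eq_cmp_of_lt_iff ⟨fun hab => (hf hab.le).lt_of_ne h, hf.reflect_lt⟩
    ⟨fun hba => (hf hba.le).lt_of_ne h.symm, hf.reflect_lt⟩

theorem exists_perm_lt_iff_lt {k : ℕ} {β : Type*} [LinearOrder β] {v : Fin k → β}
    (hv : Function.Injective v) : ∃ e : Equiv.Perm (Fin k), ∀ a b, e a < e b ↔ v a < v b := by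
  have hsorted : StrictMono (v ∘ Tuple.sort v) :=
    (Tuple.monotone_sort v).strictMono_of_injective (hv.comp (Tuple.sort v).injective)
  refine ⟨(Tuple.sort v).symm, fun a b => ?_⟩
  simpa using (hsorted.lt_iff_lt (a := (Tuple.sort v).symm a) (b := (Tuple.sort v).symm b)).symm

namespace Perm'

theorem Le.inverse {σ π : Perm'} (h : σ.Le π) : σ.inverse.Le π.inverse := by
  obtain ⟨f, hf, hv⟩ := h
  refine ⟨fun a => π.2 (f (σ.2.symm a)), fun a b hab => ?_, fun a b => ?_⟩
  · exact (hv _ _).mp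
      ((σ.2.apply_symm_apply a).trans_lt (hab.trans_eq (σ.2.apply_symm_apply b).symm))
  · show σ.2.symm a < σ.2.symm b ↔
      π.2.symm (π.2 (f (σ.2.symm a))) < π.2.symm (π.2 (f (σ.2.symm b)))
    rw [Equiv.symm_apply_apply, Equiv.symm_apply_apply]
    exact hf.lt_iff_lt.symm

theorem Le.reverse {σ π : Perm'} (h : σ.Le π) : σ.reverse.Le π.reverse := by
  obtain ⟨f, hf, hv⟩ := h
  refine ⟨fun a => (f a.rev).rev,
    fun a b hab => Fin.rev_lt_rev.mpr (hf (Fin.rev_lt_rev.mpr hab)), fun a b => ?_⟩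
  show σ.2 a.rev < σ.2 b.rev ↔ π.2 (f a.rev).rev.rev < π.2 (f b.rev).rev.rev
  rw [Fin.rev_rev, Fin.rev_rev]
  exact hv a.rev b.rev

theorem Le.complement {σ π : Perm'} (h : σ.Le π) : σ.complement.Le π.complement := by
  obtain ⟨f, hf, hv⟩ := h
  refine ⟨f, hf, fun a b => ?_⟩
  show (σ.2 a).rev < (σ.2 b).rev ↔ (π.2 (f a)).rev < (π.2 (f b)).rev
  rw [Fin.rev_lt_rev, Fin.rev_lt_rev]
  exact hv b a

theorem inverse_involutive : Function.Involutive inverse := fun _ => rfl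

theorem reverse_involutive : Function.Involutive reverse := fun π =>
  congrArg (Sigma.mk π.1) (Equiv.ext fun a => congrArg π.2 (Fin.rev_rev a))

theorem complement_involutive : Function.Involutive complement := fun π =>
  congrArg (Sigma.mk π.1) (Equiv.ext fun a => Fin.rev_rev (π.2 a))

end Perm'

theorem IsPermClass.image {j : Perm' → Perm'} (hj : Function.Involutive j)
    (hmono : ∀ σ π : Perm', σ.Le π → (j σ).Le (j π)) {C : Set Perm'} (hC : IsPermClass C) :
    IsPermClass (j '' C) := by
  rintro _ ⟨ρ, hρ, rfl⟩ σ hσ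
  exact ⟨j σ, hC ρ hρ _ (hj ρ ▸ hmono _ _ hσ), hj σ⟩

theorem IsGriddingMatrix.isPermClass {m n : ℕ} {M : Fin m → Fin n → Set Perm'}
    (hM : IsGriddingMatrix M) (i : Fin m) (j : Fin n) : IsPermClass (M i j) := by
  rcases hM i j with ⟨hC, -⟩ | hempty
  · exact hC
  · rw [hempty]
    exact fun _ h => h.elim

theorem IsGridMapping.isPermClass_onMat {m n m' n' : ℕ} {F : GMap m n m' n'}
    (hF : IsGridMapping F) :
    ∀ M : Fin m → Fin n → Set Perm', (∀ i j, IsPermClass (M i j)) →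
      ∀ i j, IsPermClass (F.onMat M i j) := by
  induction hF with
  | inverse _ hM _ =>
    intro M hC i j
    rw [hM]
    exact (hC j i).image Perm'.inverse_involutive fun _ _ => Perm'.Le.inverse
  | colRev s _ hM _ =>
    intro M hC i j
    rw [hM, matColRev]
    split_ifs
    · exact (hC i j).image Perm'.reverse_involutive fun _ _ => Perm'.Le.reverse
    · exact hC i j
  | rowCompl t _ hM _ =>
    intro M hC i j
    rw [hM, matRowCompl]
    split_ifs
    · exact (hC i j).image Perm'.complement_involutive fun _ _ => Perm'.Le.complement
    · exact hC i j
  | colPerm μ _ hM _ => exact fun M hC i j => hM M ▸ hC (μ i) j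
  | rowPerm ν _ hM _ => exact fun M hC i j => hM M ▸ hC i (ν j)
  | comp _ _ _ _ ihF ihG => exact fun M hC => ihG _ (ihF M hC)

theorem exists_isPatternOf (π : Perm') (S : Set (Fin π.1)) : ∃ τ, IsPatternOf π S τ := by
  classical
  let g := S.toFinset.orderEmbOfFin rfl
  obtain ⟨e, he⟩ := exists_perm_lt_iff_lt (π.2.injective.comp g.injective)
  refine ⟨⟨_, e⟩, g, g.strictMono, fun a => ?_, fun i hi => ?_, he⟩
  · exact Set.mem_toFinset.mp (S.toFinset.orderEmbOfFin_mem rfl a)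
  · have hi : i ∈ Set.range g := by
      rw [Finset.range_orderEmbOfFin]
      simpa using hi
    exact hi

theorem IsPatternOf.le_of_embedding {π τ σ : Perm'} {S : Set (Fin π.1)}
    (hτ : IsPatternOf π S τ) (f : Fin σ.1 → Fin π.1) (hf : StrictMono f) (hfS : ∀ a, f a ∈ S)
    (hv : ∀ a b, σ.2 a < σ.2 b ↔ π.2 (f a) < π.2 (f b)) : σ.Le τ := by
  obtain ⟨g, hg, -, hgS, hgv⟩ := hτ
  choose E hE using fun a => hgS (f a) (hfS a)
  refine ⟨E, fun a b hab => hg.lt_iff_lt.mp ?_, fun a b => ?_⟩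
  · rw [hE, hE]
    exact hf hab
  · rw [hv, hgv, hE, hE]

theorem IsMGridding.comp_embedding {m n : ℕ} {N : Fin m → Fin n → Set Perm'}
    (hN : ∀ s t, IsPermClass (N s t)) {β β' : Perm'} {κ : Fin β'.1 → Fin m × Fin n}
    (h : IsMGridding N β' κ) (f : Fin β.1 → Fin β'.1) (hf : StrictMono f)
    (hv : ∀ a b, β.2 a < β.2 b ↔ β'.2 (f a) < β'.2 (f b)) : IsMGridding N β (κ ∘ f) := by
  refine ⟨⟨fun i i' hii' => h.1.1 _ _ (hf.monotone hii'), fun i i' hii' => ?_⟩,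
    fun s t => ?_⟩
  · rcases hii'.lt_or_eq with hlt | heq
    · exact h.1.2 _ _ ((hv i i').mp hlt).le
    · rw [β.2.injective heq]
  · rcases h.2 s t with hempty | ⟨τ', hτ', hpat'⟩
    · exact Or.inl fun i => hempty (f i)
    · obtain ⟨τ, hpat⟩ := exists_isPatternOf β {i | κ (f i) = (s, t)}
      obtain ⟨g, hg, hgS, -, hgv⟩ := id hpat
      have hle : τ.Le τ' :=
        hpat'.le_of_embedding (f ∘ g) (hf.comp hg) hgS fun a b => (hgv a b).trans (hv _ _)
      exact Or.inr ⟨τ, hN s t τ' hτ' τ hle, hpat⟩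

theorem GriddedLe.toPerm_le {m n : ℕ} {α π : GriddedPerm m n} (h : GriddedLe α π) :
    α.toPerm.Le π.toPerm :=
  let ⟨f, hf, hv, _⟩ := h
  ⟨f, hf, hv⟩

theorem griddedLe_of_toPerm_le {m n : ℕ} {N : Fin m → Fin n → Set Perm'}
    (hN : ∀ s t, IsPermClass (N s t)) {α π : GriddedPerm m n}
    (hα : UniqueMGridding N α.toPerm α.κ) (hπ : IsMGridding N π.toPerm π.κ)
    (h : α.toPerm.Le π.toPerm) : GriddedLe α π := by
  obtain ⟨f, hf, hv⟩ := h
  exact ⟨f, hf, hv, congrFun (hα.2 _ (hπ.comp_embedding hN f hf hv))⟩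

namespace BlockRev

variable {l : ℕ} {S : Set (Fin l)} {h : Equiv.Perm (Fin l)}

theorem symm (hb : BlockRev S h) : BlockRev S h.symm := by
  have hfix : ∀ p, p ∉ S → h.symm p = p := fun p hp => h.symm_apply_eq.mpr (hb.1 p hp).symm
  have hmem : ∀ p, p ∈ S → h.symm p ∈ S := fun p hp => by
    by_contra hq
    have := hb.1 _ hq
    rw [Equiv.apply_symm_apply] at this
    exact hq (this ▸ hp)
  refine ⟨hfix, hmem, fun p hp q hq => ?_⟩
  simpa using (hb.2.2 _ (hmem q hq) _ (hmem p hp)).symm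

theorem cmp_apply (hb : BlockRev S h) {p q : Fin l} (hp : p ∈ S) (hq : q ∈ S) :
    cmp (h p : ℕ) (h q) = cmp (q : ℕ) p := by
  rw [Fin.val_strictMono.cmp_map_eq, Fin.val_strictMono.cmp_map_eq]
  exact cmp_eq_cmp_of_lt_iff (hb.2.2 q hq p hp).symm (hb.2.2 p hp q hq).symm

end BlockRev

abbrev PairType (m n : ℕ) : Type := (Fin m × Fin n) × (Fin m × Fin n) × Ordering × Ordering

namespace GriddedPerm

variable {m n : ℕ}

-- Positions and values are compared in `ℕ`, where the length casts of the grid-mapping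
-- specifications disappear.
def pairType (g : GriddedPerm m n) (p q : Fin g.len) : PairType m n :=
  (g.κ p, g.κ q, cmp (p : ℕ) q, cmp (g.e p : ℕ) (g.e q))

theorem cmp_pos_of_col_ne (g : GriddedPerm m n) {p q : Fin g.len}
    (h : (g.κ p).1 ≠ (g.κ q).1) : cmp (p : ℕ) q = cmp (g.κ p).1 (g.κ q).1 := by
  rw [Fin.val_strictMono.cmp_map_eq]
  exact cmp_eq_cmp_of_monotone_of_ne (f := fun i => (g.κ i).1) (g.col_mono · ·) h

theorem cmp_val_of_row_ne (g : GriddedPerm m n) {p q : Fin g.len}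
    (h : (g.κ p).2 ≠ (g.κ q).2) : cmp (g.e p : ℕ) (g.e q) = cmp (g.κ p).2 (g.κ q).2 := by
  rw [Fin.val_strictMono.cmp_map_eq]
  have hmono : Monotone fun v => (g.κ (g.e.symm v)).2 := fun v w hvw =>
    g.row_mono _ _ (by simpa using hvw)
  simpa using cmp_eq_cmp_of_monotone_of_ne hmono (a := g.e p) (b := g.e q) (by simpa using h)

end GriddedPerm

theorem griddedLe_iff_exists_pairType {m n : ℕ} {α π : GriddedPerm m n} :
    GriddedLe α π ↔
      ∃ f : Fin α.len → Fin π.len, ∀ a b, π.pairType (f a) (f b) = α.pairType a b := by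
  constructor
  · rintro ⟨f, hf, hv, hκ⟩
    refine ⟨f, fun a b => ?_⟩
    simp only [GriddedPerm.pairType, hκ, Fin.val_strictMono.cmp_map_eq, hf.cmp_map_eq,
      cmp_eq_cmp_of_lt_iff (hv a b) (hv b a)]
  · rintro ⟨f, hf⟩
    have hpos a b : cmp (f a : ℕ) (f b) = cmp (a : ℕ) b := congrArg (·.2.2.1) (hf a b)
    have hval a b : cmp (π.e (f a) : ℕ) (π.e (f b)) = cmp (α.e a : ℕ) (α.e b) :=
      congrArg (·.2.2.2) (hf a b)
    refine ⟨f, fun a b hab => ?_, fun a b => ?_, fun a => congrArg Prod.fst (hf a a)⟩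
    · rw [Fin.lt_def, ← cmp_eq_lt_iff, hpos, cmp_eq_lt_iff]
      exact hab
    · rw [Fin.lt_def, Fin.lt_def, ← cmp_eq_lt_iff, ← cmp_eq_lt_iff, hval]

def PairTypesRecovered {m n m' n' : ℕ} (T : PairType m' n' → PairType m n)
    (g : GriddedPerm m n) (out : GriddedPerm m' n') (c : Fin g.len → Fin out.len) : Prop :=
  Function.Surjective c ∧ ∀ p q, g.pairType p q = T (out.pairType (c p) (c q))

def GMap.RecoversPairTypes {m n m' n' : ℕ} (F : GMap m n m' n') : Prop :=
  ∃ T : PairType m' n' → PairType m n, ∀ g, PairTypesRecovered T g (F.onGrid g) (F.corr g)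

theorem GMap.RecoversPairTypes.comp {m n m' n' m'' n'' : ℕ} {F : GMap m n m' n'}
    {G : GMap m' n' m'' n''} (hF : F.RecoversPairTypes) (hG : G.RecoversPairTypes) :
    (F.comp G).RecoversPairTypes := by
  obtain ⟨T, hT⟩ := hF
  obtain ⟨U, hU⟩ := hG
  exact ⟨T ∘ U, fun g => ⟨(hU _).1.comp (hT g).1,
    fun p q => ((hT g).2 p q).trans (congrArg T ((hU _).2 _ _))⟩⟩

theorem GMap.RecoversPairTypes.griddedLe_of_griddedLe_onGrid {m n m' n' : ℕ}
    {F : GMap m n m' n'} (hF : F.RecoversPairTypes) {α π : GriddedPerm m n}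
    (h : GriddedLe (F.onGrid α) (F.onGrid π)) : GriddedLe α π := by
  obtain ⟨T, hT⟩ := hF
  obtain ⟨f, hf⟩ := griddedLe_iff_exists_pairType.mp h
  choose f' hf' using fun a => (hT π).1 (f (F.corr α a))
  refine griddedLe_iff_exists_pairType.mpr ⟨f', fun a b => ?_⟩
  rw [(hT π).2, (hT α).2, hf', hf', hf]

section Generators

variable {m n : ℕ} {g : GriddedPerm m n}

theorem SpecInverse.pairTypesRecovered {out : GriddedPerm n m} {c : Fin g.len → Fin out.len}
    (hs : SpecInverse g out c) :
    PairTypesRecovered (fun ⟨k, k', o, o'⟩ => (k.swap, k'.swap, o', o)) g out c := by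
  obtain ⟨hl, hc, he, hκ⟩ := hs
  refine ⟨fun v => ⟨g.e.symm (Fin.cast hl.symm v), by simp [hc]⟩, fun p q => ?_⟩
  simp [GriddedPerm.pairType, hc, he, hκ]

theorem SpecColRev.pairTypesRecovered {s : Fin m} {out : GriddedPerm m n}
    {c : Fin g.len → Fin out.len} (hs : SpecColRev s g out c) :
    PairTypesRecovered
      (fun ⟨k, k', o, o'⟩ => (k, k', if k.1 = s ∧ k'.1 = s then o.swap else o, o'))
      g out c := by
  obtain ⟨hl, h, hb, hc, he, hκ⟩ := hs
  have hκc p : out.κ (c p) = g.κ p := by simp [hc, hκ]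
  have hec p : (out.e (c p) : ℕ) = g.e p := by simp [hc, he]
  have hpos (p q : Fin g.len) : cmp (p : ℕ) q =
      if (g.κ p).1 = s ∧ (g.κ q).1 = s then (cmp (c p : ℕ) (c q)).swap
      else cmp (c p : ℕ) (c q) := by
    by_cases hcol : (g.κ p).1 = (g.κ q).1
    · by_cases hps : (g.κ p).1 = s
      · rw [if_pos ⟨hps, hcol ▸ hps⟩, hc, hc, Fin.val_cast, Fin.val_cast,
          hb.symm.cmp_apply hps (hcol ▸ hps : (g.κ q).1 = s), cmp_swap]
      · rw [if_neg (fun hS => hps hS.1), hc, hc, Fin.val_cast, Fin.val_cast,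
          hb.symm.1 p hps, hb.symm.1 q (hcol ▸ hps : (g.κ q).1 ≠ s)]
    · rw [if_neg (fun hS => hcol (hS.1.trans hS.2.symm)), g.cmp_pos_of_col_ne hcol,
        out.cmp_pos_of_col_ne (by rwa [hκc, hκc]), hκc, hκc]
  refine ⟨fun i => ⟨h (Fin.cast hl.symm i), by simp [hc]⟩, fun p q => ?_⟩
  simp only [GriddedPerm.pairType, hκc, hec, hpos p q]

theorem SpecRowCompl.pairTypesRecovered {t : Fin n} {out : GriddedPerm m n}
    {c : Fin g.len → Fin out.len} (hs : SpecRowCompl t g out c) :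
    PairTypesRecovered
      (fun ⟨k, k', o, o'⟩ => (k, k', o, if k.2 = t ∧ k'.2 = t then o'.swap else o'))
      g out c := by
  obtain ⟨hl, h, hb, hc, he, hκ⟩ := hs
  have hκc p : out.κ (c p) = g.κ p := by simp [hc, hκ]
  have hpc p : (c p : ℕ) = p := by simp [hc]
  have hec p : (out.e (c p) : ℕ) = h (g.e p) := by simp [hc, he]
  have hval (p q : Fin g.len) : cmp (g.e p : ℕ) (g.e q) =
      if (g.κ p).2 = t ∧ (g.κ q).2 = t then (cmp (out.e (c p) : ℕ) (out.e (c q))).swap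
      else cmp (out.e (c p) : ℕ) (out.e (c q)) := by
    have hmem : ∀ p, (g.κ p).2 = t → g.e p ∈ {v | (g.κ (g.e.symm v)).2 = t} := by simp
    by_cases hrow : (g.κ p).2 = (g.κ q).2
    · by_cases hpt : (g.κ p).2 = t
      · rw [if_pos ⟨hpt, hrow ▸ hpt⟩, hec, hec,
          hb.cmp_apply (hmem p hpt) (hmem q (hrow ▸ hpt)), cmp_swap]
      · rw [if_neg (fun hS => hpt hS.1), hec, hec, hb.1 _ (by simpa using hpt),
          hb.1 _ (by simpa [← hrow] using hpt)]
    · rw [if_neg (fun hS => hrow (hS.1.trans hS.2.symm)), g.cmp_val_of_row_ne hrow,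
        out.cmp_val_of_row_ne (by rwa [hκc, hκc]), hκc, hκc]
  refine ⟨fun i => ⟨Fin.cast hl.symm i, by simp [hc]⟩, fun p q => ?_⟩
  simp only [GriddedPerm.pairType, hκc, hpc, hval p q]

theorem SpecColPerm.pairTypesRecovered {μ : Equiv.Perm (Fin m)} {out : GriddedPerm m n}
    {c : Fin g.len → Fin out.len} (hs : SpecColPerm μ g out c) :
    PairTypesRecovered (fun ⟨k, k', o, o'⟩ =>
      ((μ k.1, k.2), (μ k'.1, k'.2), if k.1 = k'.1 then o else cmp (μ k.1) (μ k'.1), o'))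
      g out c := by
  obtain ⟨hl, h, hch, hc, he, hκ⟩ := hs
  have hκc p : out.κ (c p) = (μ.symm (g.κ p).1, (g.κ p).2) := by simp [hc, hκ]
  have hec p : (out.e (c p) : ℕ) = g.e p := by simp [hc, he]
  have hpos (p q : Fin g.len) : cmp (p : ℕ) q =
      if (g.κ p).1 = (g.κ q).1 then cmp (c p : ℕ) (c q) else cmp (g.κ p).1 (g.κ q).1 := by
    by_cases hcol : (g.κ p).1 = (g.κ q).1
    · rw [if_pos hcol, hc, hc, Fin.val_cast, Fin.val_cast, Fin.val_strictMono.cmp_map_eq,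
        Fin.val_strictMono.cmp_map_eq]
      exact cmp_eq_cmp_of_lt_iff ((hch _ _).trans (by simp [hcol])).symm
        ((hch _ _).trans (by simp [hcol])).symm
    · rw [if_neg hcol, g.cmp_pos_of_col_ne hcol]
  refine ⟨fun i => ⟨h (Fin.cast hl.symm i), by simp [hc]⟩, fun p q => ?_⟩
  simp [GriddedPerm.pairType, hκc, hec, hpos p q]

theorem SpecRowPerm.pairTypesRecovered {ν : Equiv.Perm (Fin n)} {out : GriddedPerm m n}
    {c : Fin g.len → Fin out.len} (hs : SpecRowPerm ν g out c) :
    PairTypesRecovered (fun ⟨k, k', o, o'⟩ =>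
      ((k.1, ν k.2), (k'.1, ν k'.2), o, if k.2 = k'.2 then o' else cmp (ν k.2) (ν k'.2)))
      g out c := by
  obtain ⟨hl, h, hch, hc, he, hκ⟩ := hs
  have hκc p : out.κ (c p) = ((g.κ p).1, ν.symm (g.κ p).2) := by simp [hc, hκ]
  have hpc p : (c p : ℕ) = p := by simp [hc]
  have hec p : (out.e (c p) : ℕ) = h (g.e p) := by simp [hc, he]
  have hval (p q : Fin g.len) : cmp (g.e p : ℕ) (g.e q) =
      if (g.κ p).2 = (g.κ q).2 then cmp (out.e (c p) : ℕ) (out.e (c q))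
      else cmp (g.κ p).2 (g.κ q).2 := by
    by_cases hrow : (g.κ p).2 = (g.κ q).2
    · rw [if_pos hrow, hec, hec, Fin.val_strictMono.cmp_map_eq, Fin.val_strictMono.cmp_map_eq]
      exact cmp_eq_cmp_of_lt_iff (by simp [hch, hrow]) (by simp [hch, hrow])
    · rw [if_neg hrow, g.cmp_val_of_row_ne hrow]
  refine ⟨fun i => ⟨Fin.cast hl.symm i, by simp [hc]⟩, fun p q => ?_⟩
  simp [GriddedPerm.pairType, hκc, hpc, hval p q]

end Generators

theorem IsGridMapping.recoversPairTypes {m n m' n' : ℕ} {F : GMap m n m' n'}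
    (hF : IsGridMapping F) : F.RecoversPairTypes := by
  induction hF with
  | inverse _ _ hG => exact ⟨_, fun g => (hG g).pairTypesRecovered⟩
  | colRev _ _ _ hG => exact ⟨_, fun g => (hG g).pairTypesRecovered⟩
  | rowCompl _ _ _ hG => exact ⟨_, fun g => (hG g).pairTypesRecovered⟩
  | colPerm _ _ _ hG => exact ⟨_, fun g => (hG g).pairTypesRecovered⟩
  | rowPerm _ _ _ hG => exact ⟨_, fun g => (hG g).pairTypesRecovered⟩
  | comp _ _ _ _ ihF ihG => exact ihF.comp ihG

/-- **Theorem.**  Let `M` be a gridding matrix, and let `A` be an antichain for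
which infinitely many elements are strongly uniquely `M`-griddable.  Then the
grid class of any gridding matrix `N` that is equivalent to `M` under some
grid mapping is not partially well-ordered. -/
theorem not_pwo_of_strongly_unique_antichain {m n : ℕ}
    (M : Fin m → Fin n → Set Perm') (hM : IsGriddingMatrix M)
    (A : Set Perm') (hA : IsPermAntichain A)
    (hinf : {α ∈ A | StronglyUniquelyGriddable M α}.Infinite)
    {m' n' : ℕ} (N : Fin m' → Fin n' → Set Perm')
    (hN : ∃ F : GMap m n m' n', IsGridMapping F ∧ F.onMat M = N) :
    ¬ IsPwo (GridClass N) := by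
  obtain ⟨F, hF, rfl⟩ := hN
  have hcls := hF.isPermClass_onMat M hM.isPermClass
  let α := hinf.natEmbedding
  choose g hgα _ hgF using fun i => (α i).2.2
  have hunique i := hgF i m' n' F hF
  refine fun hpwo => hpwo ⟨fun i => (F.onGrid (g i)).toPerm, fun i => ⟨_, (hunique i).1⟩,
    fun i j hij hle => ?_⟩
  have hgle : GriddedLe (g i) (g j) := hF.recoversPairTypes.griddedLe_of_griddedLe_onGrid
    (griddedLe_of_toPerm_le hcls (hunique i) (hunique j).1 hle)
  refine hA _ (α i).2.1 _ (α j).2.1 (fun h => hij (α.injective (Subtype.ext h))) ?_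
  rw [← hgα i, ← hgα j]
  exact hgle.toPerm_le
end

section
/- In a grid pin sequence, if p_{i+1} is a left pin then the horizontal coordinate of p_{i+1} is smaller than that of every earlier left pin lying in the same column of the grid, and larger than that of every earlier right pin lying in the same column of the grid. The analogous statements hold when p_{i+1} is a right pin (with the inequalities reversed), and when p_{i+1} is an up or down pin (with rows of the grid and vertical coordinates in place of columns and horizontal coordinates). -/
/-! Grid pin sequences in a gridded plane.  The gridded plane is described by
the set `V` of vertical grid line coordinates and the set `H` of horizontal
grid line coordinates. -/

/-- `q` separates `a` from `b` by position. -/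
def SepX (q a b : ℝ × ℝ) : Prop := min a.1 b.1 < q.1 ∧ q.1 < max a.1 b.1

/-- `q` separates `a` from `b` by value. -/
def SepY (q a b : ℝ × ℝ) : Prop := min a.2 b.2 < q.2 ∧ q.2 < max a.2 b.2

/-- `q` lies in `rect(a,b)`. -/
def InRect (q a b : ℝ × ℝ) : Prop :=
  min a.1 b.1 ≤ q.1 ∧ q.1 ≤ max a.1 b.1 ∧ min a.2 b.2 ≤ q.2 ∧ q.2 ≤ max a.2 b.2

/-- No grid line of `S` lies strictly between `x` and `y`. -/
def NoLineBetween (S : Set ℝ) (x y : ℝ) : Prop := ∀ v ∈ S, ¬ (min x y < v ∧ v < max x y)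

/-- Two horizontal coordinates lie in the same column of the grid. -/
def SameCol (V : Set ℝ) (x y : ℝ) : Prop := ∀ v ∈ V, (v < x ↔ v < y)

/-- Two vertical coordinates lie in the same row of the grid. -/
def SameRow (H : Set ℝ) (x y : ℝ) : Prop := ∀ h ∈ H, (h < x ↔ h < y)

/-- `q` is a left pin with respect to `rect(a,b)`. -/
def IsLeftP (a b q : ℝ × ℝ) : Prop := q.1 < min a.1 b.1 ∧ SepY q a b

/-- `q` is a right pin with respect to `rect(a,b)`. -/
def IsRightP (a b q : ℝ × ℝ) : Prop := max a.1 b.1 < q.1 ∧ SepY q a b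

/-- `q` is an up pin with respect to `rect(a,b)`. -/
def IsUpP (a b q : ℝ × ℝ) : Prop := max a.2 b.2 < q.2 ∧ SepX q a b

/-- `q` is a down pin with respect to `rect(a,b)`. -/
def IsDownP (a b q : ℝ × ℝ) : Prop := q.2 < min a.2 b.2 ∧ SepX q a b

/-- Row-column agreement of `q` as a pin for the pair `(a, b)`: an up or down
pin lies in the same column of the grid as `b`, a left or right pin in the same
row as `b`. -/
def RCAgree (V H : Set ℝ) (a b q : ℝ × ℝ) : Prop :=
  ((IsUpP a b q ∨ IsDownP a b q) → SameCol V q.1 b.1) ∧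
  ((IsLeftP a b q ∨ IsRightP a b q) → SameRow H q.2 b.2)

/-- The conditions making `p 1, …, p N` a grid pin sequence with fictive pin
`p 0`: genericity of the points, adjacency of `p 1` to the origin, and for
each later pin local separation, local externality, row-column agreement and
non-interaction (it could not have been used as a grid pin earlier). -/
def PinConds (V H : Set ℝ) (p : ℕ → ℝ × ℝ) (N : ℕ) : Prop :=
  (∀ i, 1 ≤ i → i ≤ N → (p i).1 ∉ V ∧ (p i).2 ∉ H) ∧
  (∀ i j, 1 ≤ i → i ≤ N → 1 ≤ j → j ≤ N → i ≠ j →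
    (p i).1 ≠ (p j).1 ∧ (p i).2 ≠ (p j).2) ∧
  (∀ i, 1 ≤ i → i ≤ N → (p i).1 ≠ (p 0).1 ∧ (p i).2 ≠ (p 0).2) ∧
  (1 ≤ N → NoLineBetween V (p 0).1 (p 1).1 ∧ NoLineBetween H (p 0).2 (p 1).2) ∧
  (∀ i, 1 ≤ i → i + 1 ≤ N →
    (SepX (p (i+1)) (p (i-1)) (p i) ∨ SepY (p (i+1)) (p (i-1)) (p i)) ∧
    (∀ j, 1 ≤ j → j ≤ i → ¬ InRect (p (i+1)) (p (j-1)) (p j)) ∧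
    RCAgree V H (p (i-1)) (p i) (p (i+1)) ∧
    (∀ j, 1 ≤ j → j < i →
      ¬ ((SepX (p (i+1)) (p (j-1)) (p j) ∨ SepY (p (i+1)) (p (j-1)) (p j)) ∧
         RCAgree V H (p (j-1)) (p j) (p (i+1)) ∧
         (∀ j', 1 ≤ j' → j' ≤ j → ¬ InRect (p (i+1)) (p (j'-1)) (p j')))))

/-- `p 1, …, p N` is a grid pin sequence: the fictive pin `p 0` lies at the
intersection of two perpendicular grid lines and the pin conditions hold. -/
def IsGridPinSeq (V H : Set ℝ) (p : ℕ → ℝ × ℝ) (N : ℕ) : Prop :=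
  (p 0).1 ∈ V ∧ (p 0).2 ∈ H ∧ PinConds V H p N

/-- The `j`-th pin of the sequence is a left pin (`p 1` has the two directions
given by its position relative to `p 0`). -/
def PinLeft (p : ℕ → ℝ × ℝ) (j : ℕ) : Prop :=
  (j = 1 ∧ (p 1).1 < (p 0).1) ∨ (2 ≤ j ∧ IsLeftP (p (j-2)) (p (j-1)) (p j))

/-- The `j`-th pin of the sequence is a right pin. -/
def PinRight (p : ℕ → ℝ × ℝ) (j : ℕ) : Prop :=
  (j = 1 ∧ (p 0).1 < (p 1).1) ∨ (2 ≤ j ∧ IsRightP (p (j-2)) (p (j-1)) (p j))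

/-- The `j`-th pin of the sequence is an up pin. -/
def PinUp (p : ℕ → ℝ × ℝ) (j : ℕ) : Prop :=
  (j = 1 ∧ (p 0).2 < (p 1).2) ∨ (2 ≤ j ∧ IsUpP (p (j-2)) (p (j-1)) (p j))

/-- The `j`-th pin of the sequence is a down pin. -/
def PinDown (p : ℕ → ℝ × ℝ) (j : ℕ) : Prop :=
  (j = 1 ∧ (p 1).2 < (p 0).2) ∨ (2 ≤ j ∧ IsDownP (p (j-2)) (p (j-1)) (p j))

/-! By the reflection `x ↦ -x` and the exchange of the axes it suffices to show that a horizontal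
pin `p (k+2)` lies left of every earlier left pin `p j` in its column. Non-interaction forbids
`p (k+2)` to separate by position an earlier pair `(p l, p (l+1))` with `p (l+1)` in its column,
since it would then have been a valid pin for that pair. So if `p j` were left of `p (k+2)`, the
pins before `p j` are dragged into the column, left of `p (k+2)`; since horizontal and vertical
pins alternate, the last horizontal pin `p l` before `p j` ends up in the column strictly between
`p j` and `p (k+2)`. A left pin `p l` contradicts induction on `j`; a right pin `p l` contradicts
the statement for the earlier pin `p j` (induction on `k`). For `j = 1` the vertical grid line
through the fictive pin separates `p 1` from `p (k+2)`. -/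

open scoped Pointwise

def IsHorizP (a b q : ℝ × ℝ) : Prop := IsLeftP a b q ∨ IsRightP a b q

def IsVertP (a b q : ℝ × ℝ) : Prop := IsUpP a b q ∨ IsDownP a b q

theorem lt_iff_lt_iff_lt_iff_lt_of_ne {α : Type*} [LinearOrder α] {x y v : α} (hx : x ≠ v)
    (hy : y ≠ v) : (x < v ↔ y < v) ↔ (v < x ↔ v < y) := by
  have flip : ∀ {a b : α}, a ≠ b → (a < b ↔ ¬ b < a) :=
    fun h => ⟨fun h' => h'.not_gt, fun h' => lt_of_le_of_ne (not_lt.1 h') h⟩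
  rw [flip hx, flip hy, not_iff_not]

section Geometry

variable {V H : Set ℝ} {a b c q r : ℝ × ℝ} {v x y z : ℝ}

theorem SameCol.symm (h : SameCol V x y) : SameCol V y x :=
  fun v hv => (h v hv).symm

theorem SameCol.trans (h₁ : SameCol V x y) (h₂ : SameCol V y z) : SameCol V x z :=
  fun v hv => (h₁ v hv).trans (h₂ v hv)

theorem SameCol.of_lt_of_lt (h : SameCol V x z) (hxy : x < y) (hyz : y < z) : SameCol V y z :=
  fun v hv => ⟨fun hvy => hvy.trans hyz, fun hvz => ((h v hv).2 hvz).trans hxy⟩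

theorem not_sameCol_of_lt_of_lt (hv : v ∈ V) (hxv : x < v) (hvy : v < y) : ¬ SameCol V x y :=
  fun h => lt_asymm hxv ((h v hv).2 hvy)

theorem SameRow.trans (h₁ : SameRow H x y) (h₂ : SameRow H y z) : SameRow H x z :=
  fun v hv => (h₁ v hv).trans (h₂ v hv)

theorem SepY.nested (hr : SepY r b c) (hc : SepY c a b) : SepY r a b := by
  unfold SepY at *
  rcases le_total a.2 b.2 with h | h <;> rcases le_total b.2 c.2 with h' | h' <;>
    simp only [min_eq_left, min_eq_right, max_eq_left, max_eq_right, h, h'] at hr hc ⊢ <;>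
    constructor <;> linarith [hr.1, hr.2, hc.1, hc.2]

theorem IsHorizP.sepY (h : IsHorizP a b q) : SepY q a b := h.elim And.right And.right

theorem IsHorizP.not_sepX (h : IsHorizP a b q) : ¬ SepX q a b := by
  rintro ⟨h₁, h₂⟩
  rcases h with ⟨h, -⟩ | ⟨h, -⟩ <;> linarith [min_le_max (a := a.1) (b := b.1)]

theorem IsVertP.not_sepY (h : IsVertP a b q) : ¬ SepY q a b := by
  rintro ⟨h₁, h₂⟩
  rcases h with ⟨h, -⟩ | ⟨h, -⟩ <;> linarith [min_le_max (a := a.2) (b := b.2)]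

theorem isHorizP_of_sepY (h : SepY q a b) (hq : ¬ InRect q a b) : IsHorizP a b q := by
  by_contra hc
  simp only [IsHorizP, IsLeftP, IsRightP, h, and_true, not_or, not_lt] at hc
  exact hq ⟨hc.1, hc.2, h.1.le, h.2.le⟩

theorem isVertP_of_sepX (h : SepX q a b) (hq : ¬ InRect q a b) : IsVertP a b q := by
  by_contra hc
  simp only [IsVertP, IsUpP, IsDownP, h, and_true, not_or, not_lt] at hc
  exact hq ⟨h.1.le, h.2.le, hc.2, hc.1⟩

theorem inRect_swap : InRect q.swap a.swap b.swap ↔ InRect q a b := by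
  simp only [InRect, Prod.fst_swap, Prod.snd_swap]
  tauto

end Geometry

section Reflection

def reflectX (a : ℝ × ℝ) : ℝ × ℝ := (-a.1, a.2)

variable {V H : Set ℝ} {a b q : ℝ × ℝ} {x y : ℝ}

@[simp] theorem reflectX_fst : (reflectX a).1 = -a.1 := rfl

@[simp] theorem reflectX_snd : (reflectX a).2 = a.2 := rfl

@[simp] theorem sepX_reflectX : SepX (reflectX q) (reflectX a) (reflectX b) ↔ SepX q a b := by
  simp [SepX, min_neg_neg, max_neg_neg, and_comm]

@[simp] theorem sepY_reflectX : SepY (reflectX q) (reflectX a) (reflectX b) ↔ SepY q a b :=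
  Iff.rfl

@[simp] theorem inRect_reflectX : InRect (reflectX q) (reflectX a) (reflectX b) ↔ InRect q a b := by
  simp [InRect, min_neg_neg, max_neg_neg, and_left_comm]

@[simp] theorem isLeftP_reflectX :
    IsLeftP (reflectX a) (reflectX b) (reflectX q) ↔ IsRightP a b q := by
  simp [IsLeftP, IsRightP, min_neg_neg]

@[simp] theorem isRightP_reflectX :
    IsRightP (reflectX a) (reflectX b) (reflectX q) ↔ IsLeftP a b q := by
  simp [IsLeftP, IsRightP, max_neg_neg]

@[simp] theorem isUpP_reflectX : IsUpP (reflectX a) (reflectX b) (reflectX q) ↔ IsUpP a b q := by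
  simp [IsUpP]

@[simp] theorem isDownP_reflectX :
    IsDownP (reflectX a) (reflectX b) (reflectX q) ↔ IsDownP a b q := by
  simp [IsDownP]

theorem isHorizP_reflectX : IsHorizP (reflectX a) (reflectX b) (reflectX q) ↔ IsHorizP a b q := by
  simp [IsHorizP, or_comm]

@[simp] theorem noLineBetween_neg : NoLineBetween (-V) (-x) (-y) ↔ NoLineBetween V x y := by
  simp only [NoLineBetween, min_neg_neg, max_neg_neg]
  refine ⟨fun h v hv ⟨h₁, h₂⟩ => h (-v) (by simpa using hv) ⟨by linarith, by linarith⟩,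
    fun h v hv ⟨h₁, h₂⟩ => h (-v) hv ⟨by linarith, by linarith⟩⟩

theorem sameCol_neg (hx : x ∉ V) (hy : y ∉ V) : SameCol (-V) (-x) (-y) ↔ SameCol V x y := by
  refine ⟨fun h v hv => ?_, fun h v hv => ?_⟩
  · have := h (-v) (by simpa using hv)
    rw [neg_lt_neg_iff, neg_lt_neg_iff] at this
    exact (lt_iff_lt_iff_lt_iff_lt_of_ne (ne_of_mem_of_not_mem hv hx).symm
      (ne_of_mem_of_not_mem hv hy).symm).1 this
  · have hv' : -v ∈ V := hv
    rw [lt_neg (b := x), lt_neg (b := y)]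
    exact (lt_iff_lt_iff_lt_iff_lt_of_ne (ne_of_mem_of_not_mem hv' hx).symm
      (ne_of_mem_of_not_mem hv' hy).symm).2 (h (-v) hv')

theorem rcAgree_reflectX (hb : b.1 ∉ V) (hq : q.1 ∉ V) :
    RCAgree (-V) H (reflectX a) (reflectX b) (reflectX q) ↔ RCAgree V H a b q := by
  simp only [RCAgree, isUpP_reflectX, isDownP_reflectX, isLeftP_reflectX, isRightP_reflectX,
    reflectX_fst, reflectX_snd, sameCol_neg hq hb, or_comm]

theorem pinLeft_reflectX {p : ℕ → ℝ × ℝ} {j : ℕ} : PinLeft (reflectX ∘ p) j ↔ PinRight p j := by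
  simp [PinLeft, PinRight]

end Reflection

namespace IsGridPinSeq

/- Pins are indexed so that `p (k+2)` is placed against the pair `(p k, p (k+1))`: the clauses of
`PinConds` at `i = k + 1`, read without natural-number subtraction. -/

variable {V H : Set ℝ} {p : ℕ → ℝ × ℝ} {N i j k l m n : ℕ}

theorem notMem (hp : IsGridPinSeq V H p N) (hi : 1 ≤ i) (hiN : i ≤ N) :
    (p i).1 ∉ V ∧ (p i).2 ∉ H :=
  hp.2.2.1 i hi hiN

theorem fst_ne (hp : IsGridPinSeq V H p N) (hij : i < j) (hjN : j ≤ N) : (p i).1 ≠ (p j).1 := by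
  rcases Nat.eq_zero_or_pos i with rfl | hi
  · exact (hp.2.2.2.2.1 j (by omega) hjN).1.symm
  · exact (hp.2.2.2.1 i j hi (by omega) (by omega) hjN hij.ne).1

theorem sep (hp : IsGridPinSeq V H p N) (hk : k + 2 ≤ N) :
    SepX (p (k+2)) (p k) (p (k+1)) ∨ SepY (p (k+2)) (p k) (p (k+1)) :=
  (hp.2.2.2.2.2.2 (k+1) (by omega) hk).1

theorem not_inRect (hp : IsGridPinSeq V H p N) (hk : k + 2 ≤ N) (hj : j ≤ k) :
    ¬ InRect (p (k+2)) (p j) (p (j+1)) :=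
  (hp.2.2.2.2.2.2 (k+1) (by omega) hk).2.1 (j+1) (by omega) (by omega)

theorem rcAgree (hp : IsGridPinSeq V H p N) (hk : k + 2 ≤ N) :
    RCAgree V H (p k) (p (k+1)) (p (k+2)) :=
  (hp.2.2.2.2.2.2 (k+1) (by omega) hk).2.2.1

theorem not_rcAgree (hp : IsGridPinSeq V H p N) (hk : k + 2 ≤ N) (hj : j < k)
    (hsep : SepX (p (k+2)) (p j) (p (j+1)) ∨ SepY (p (k+2)) (p j) (p (j+1))) :
    ¬ RCAgree V H (p j) (p (j+1)) (p (k+2)) := fun hrc =>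
  (hp.2.2.2.2.2.2 (k+1) (by omega) hk).2.2.2 (j+1) (by omega) (by omega)
    ⟨hsep, hrc, fun j' hj' hj'j => by
      obtain ⟨j'', rfl⟩ : ∃ j'', j' = j'' + 1 := ⟨j' - 1, by omega⟩
      exact hp.not_inRect hk (by omega)⟩

theorem isHorizP_or_isVertP (hp : IsGridPinSeq V H p N) (hk : k + 2 ≤ N) :
    IsHorizP (p k) (p (k+1)) (p (k+2)) ∨ IsVertP (p k) (p (k+1)) (p (k+2)) :=
  (hp.sep hk).elim (fun h => .inr (isVertP_of_sepX h (hp.not_inRect hk le_rfl)))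
    (fun h => .inl (isHorizP_of_sepY h (hp.not_inRect hk le_rfl)))

theorem swap (hp : IsGridPinSeq V H p N) : IsGridPinSeq H V (Prod.swap ∘ p) N := by
  obtain ⟨h0x, h0y, hgen, hdist, hdist0, hadj, hpin⟩ := hp
  refine ⟨h0y, h0x, fun i h₁ h₂ => (hgen i h₁ h₂).symm,
    fun i j h₁ h₂ h₃ h₄ h₅ => (hdist i j h₁ h₂ h₃ h₄ h₅).symm,
    fun i h₁ h₂ => (hdist0 i h₁ h₂).symm, fun h => (hadj h).symm, fun i h₁ h₂ => ?_⟩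
  obtain ⟨hsep, hext, ⟨hv, hh⟩, hnon⟩ := hpin i h₁ h₂
  refine ⟨hsep.symm, fun j h₃ h₄ hin => hext j h₃ h₄ (inRect_swap.1 hin), ⟨fun h => hh h.symm, fun h => hv h.symm⟩, ?_⟩
  rintro j h₃ h₄ ⟨hsep', ⟨hv', hh'⟩, hext'⟩
  exact hnon j h₃ h₄ ⟨hsep'.symm, ⟨fun h => hh' h.symm, fun h => hv' h.symm⟩,
    fun j' h₅ h₆ hin => hext' j' h₅ h₆ (inRect_swap.2 hin)⟩

theorem reflectX (hp : IsGridPinSeq V H p N) : IsGridPinSeq (-V) H (reflectX ∘ p) N := by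
  obtain ⟨h0x, h0y, hgen, hdist, hdist0, hadj, hpin⟩ := hp
  have hfst : ∀ i, 1 ≤ i → i ≤ N → (p i).1 ∉ V := fun i h₁ h₂ => (hgen i h₁ h₂).1
  refine ⟨by simpa using h0x, h0y, fun i h₁ h₂ => by simpa using hgen i h₁ h₂,
    fun i j h₁ h₂ h₃ h₄ h₅ => by simpa using hdist i j h₁ h₂ h₃ h₄ h₅,
    fun i h₁ h₂ => by simpa using hdist0 i h₁ h₂, fun h => by simpa using hadj h,
    fun i h₁ h₂ => ?_⟩
  obtain ⟨hsep, hext, hrc, hnon⟩ := hpin i h₁ h₂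
  simp only [Function.comp_apply, sepX_reflectX, sepY_reflectX, inRect_reflectX,
    rcAgree_reflectX (hfst i h₁ (by omega)) (hfst (i+1) (by omega) h₂)]
  refine ⟨hsep, hext, hrc, fun j h₃ h₄ => ?_⟩
  rw [rcAgree_reflectX (hfst j h₃ (by omega)) (hfst (i+1) (by omega) h₂)]
  exact hnon j h₃ h₄

theorem not_isHorizP_of_isHorizP (hp : IsGridPinSeq V H p N) (hk : k + 3 ≤ N)
    (h : IsHorizP (p k) (p (k+1)) (p (k+2))) : ¬ IsHorizP (p (k+1)) (p (k+2)) (p (k+3)) := by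
  intro h'
  have hsep : SepY (p (k+3)) (p k) (p (k+1)) := h'.sepY.nested h.sepY
  have hrow : SameRow H (p (k+3)).2 (p (k+1)).2 :=
    ((hp.rcAgree (k := k+1) hk).2 h').trans ((hp.rcAgree (by omega)).2 h)
  exact hp.not_rcAgree (k := k+1) hk (j := k) (by omega) (.inr hsep)
    ⟨fun hv => absurd hsep (IsVertP.not_sepY hv), fun _ => hrow⟩

theorem not_isVertP_of_isVertP (hp : IsGridPinSeq V H p N) (hk : k + 3 ≤ N)
    (h : IsVertP (p k) (p (k+1)) (p (k+2))) : ¬ IsVertP (p (k+1)) (p (k+2)) (p (k+3)) :=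
  fun h' => hp.swap.not_isHorizP_of_isHorizP hk (Or.symm h) (Or.symm h')

theorem pinLeft_one_or_pinRight_one (hp : IsGridPinSeq V H p N) (hN : 1 ≤ N) :
    PinLeft p 1 ∨ PinRight p 1 :=
  (lt_or_gt_of_ne (hp.fst_ne zero_lt_one hN)).elim (fun h => .inr (.inl ⟨rfl, h⟩))
    (fun h => .inl (.inl ⟨rfl, h⟩))

theorem pinLeft_or_pinRight (hp : IsGridPinSeq V H p N) (hm : m + 2 ≤ N)
    (hv : IsVertP (p m) (p (m+1)) (p (m+2))) : PinLeft p (m+1) ∨ PinRight p (m+1) := by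
  rcases m with _ | m
  · exact hp.pinLeft_one_or_pinRight_one (by omega)
  · rcases hp.isHorizP_or_isVertP (k := m) (by omega) with (hl | hr) | hv'
    · exact .inl (.inr ⟨by omega, hl⟩)
    · exact .inr (.inr ⟨by omega, hr⟩)
    · exact absurd hv (hp.not_isVertP_of_isVertP hm hv')

theorem not_sepX_of_sameCol (hp : IsGridPinSeq V H p N) (hk : k + 2 ≤ N)
    (hq : IsHorizP (p k) (p (k+1)) (p (k+2))) (hl : l ≤ k)
    (hcol : SameCol V (p (l+1)).1 (p (k+2)).1) : ¬ SepX (p (k+2)) (p l) (p (l+1)) := by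
  rcases hl.lt_or_eq with hl | rfl
  · exact fun hsep => hp.not_rcAgree hk hl (.inl hsep)
      ⟨fun _ => hcol.symm, fun hh => absurd hsep (IsHorizP.not_sepX hh)⟩
  · exact hq.not_sepX

theorem fst_lt_of_sameCol (hp : IsGridPinSeq V H p N) (hk : k + 2 ≤ N)
    (hq : IsHorizP (p k) (p (k+1)) (p (k+2))) (hl : l ≤ k)
    (hcol : SameCol V (p (l+1)).1 (p (k+2)).1) (hlt : (p (l+1)).1 < (p (k+2)).1) :
    (p l).1 < (p (k+2)).1 := by
  by_contra hge
  refine hp.not_sepX_of_sameCol hk hq hl hcol ⟨(min_le_right _ _).trans_lt hlt, ?_⟩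
  exact (lt_of_le_of_ne (not_lt.1 hge) (hp.fst_ne (by omega) hk).symm).trans_le (le_max_left _ _)

theorem exists_horizontal_pin_between (hp : IsGridPinSeq V H p N) (hk : k + 2 ≤ N)
    (hq : IsHorizP (p k) (p (k+1)) (p (k+2))) (hn : n + 1 ≤ k)
    (hleft : IsLeftP (p n) (p (n+1)) (p (n+2))) (hcol : SameCol V (p (n+2)).1 (p (k+2)).1)
    (hlt : (p (n+2)).1 < (p (k+2)).1) :
    ∃ l, 1 ≤ l ∧ l ≤ n + 1 ∧ (PinLeft p l ∨ PinRight p l) ∧ SameCol V (p l).1 (p (k+2)).1 ∧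
      (p l).1 < (p (k+2)).1 ∧ (p (n+2)).1 < (p l).1 := by
  have hlt₁ : (p (n+1)).1 < (p (k+2)).1 := hp.fst_lt_of_sameCol hk hq (by omega) hcol hlt
  have hcol₁ : SameCol V (p (n+1)).1 (p (k+2)).1 :=
    hcol.of_lt_of_lt (hleft.1.trans_le (min_le_right _ _)) hlt₁
  rcases n with _ | m
  · exact ⟨1, le_rfl, le_rfl, hp.pinLeft_one_or_pinRight_one (by omega), hcol₁, hlt₁,
      hleft.1.trans_le (min_le_right _ _)⟩
  · have hv : IsVertP (p m) (p (m+1)) (p (m+2)) :=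
      (hp.isHorizP_or_isVertP (by omega)).resolve_left
        fun hh => hp.not_isHorizP_of_isHorizP (by omega) hh (.inl hleft)
    have hcol₀ : SameCol V (p (m+1)).1 (p (k+2)).1 :=
      ((hp.rcAgree (by omega)).1 hv).symm.trans hcol₁
    exact ⟨m+1, by omega, by omega, hp.pinLeft_or_pinRight (by omega) hv, hcol₀,
      hp.fst_lt_of_sameCol hk hq (by omega) hcol₁ hlt₁, hleft.1.trans_le (min_le_left _ _)⟩

theorem lt_fst_of_pinLeft (hp : IsGridPinSeq V H p N) (hk : k + 2 ≤ N)
    (hq : IsHorizP (p k) (p (k+1)) (p (k+2)))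
    (hright : ∀ k' < k, IsHorizP (p k') (p (k'+1)) (p (k'+2)) → ∀ j, 1 ≤ j → j ≤ k' + 1 →
      SameCol V (p j).1 (p (k'+2)).1 → PinRight p j → (p j).1 < (p (k'+2)).1)
    (j : ℕ) (hj : 1 ≤ j) (hjk : j ≤ k + 1) (hcol : SameCol V (p j).1 (p (k+2)).1)
    (hl : PinLeft p j) : (p (k+2)).1 < (p j).1 := by
  induction j using Nat.strong_induction_on with
  | _ j ih =>
  by_contra hge
  have hlt : (p j).1 < (p (k+2)).1 := lt_of_le_of_ne (not_lt.1 hge) (hp.fst_ne (by omega) hk)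
  rcases hl with ⟨rfl, h10⟩ | ⟨hj2, hleft⟩
  · exact not_sameCol_of_lt_of_lt hp.1 h10
      (hp.fst_lt_of_sameCol hk hq (l := 0) k.zero_le hcol hlt) hcol
  · obtain ⟨n, rfl⟩ : ∃ n, j = n + 2 := ⟨j - 2, by omega⟩
    obtain ⟨l, hl1, hln, hLR, hcoll, hltl, hjl⟩ :=
      hp.exists_horizontal_pin_between hk hq (by omega) hleft hcol hlt
    rcases hLR with hL | hR
    · exact lt_asymm (ih l (by omega) hl1 (by omega) hcoll hL) hltl
    · exact lt_asymm (hright n (by omega) (.inl hleft) l hl1 hln (hcoll.trans hcol.symm) hR) hjl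

theorem horizontal_placement (hp : IsGridPinSeq V H p N) (hk : k + 2 ≤ N)
    (hq : IsHorizP (p k) (p (k+1)) (p (k+2))) (j : ℕ) (hj : 1 ≤ j) (hjk : j ≤ k + 1)
    (hcol : SameCol V (p j).1 (p (k+2)).1) :
    (PinLeft p j → (p (k+2)).1 < (p j).1) ∧ (PinRight p j → (p j).1 < (p (k+2)).1) := by
  induction k using Nat.strong_induction_on generalizing V p j with
  | _ k ih =>
  have hright {V : Set ℝ} {p : ℕ → ℝ × ℝ} (hp : IsGridPinSeq V H p N) :=
    fun k' hk' hq' j' hj' hjk' hcol' => (ih k' hk' hp (by omega) hq' j' hj' hjk' hcol').2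
  refine ⟨hp.lt_fst_of_pinLeft hk hq (hright hp) j hj hjk hcol, fun hR => ?_⟩
  have hcol' : SameCol (-V) (-(p j).1) (-(p (k+2)).1) :=
    (sameCol_neg (hp.notMem hj (by omega)).1 (hp.notMem (by omega) hk).1).2 hcol
  simpa using hp.reflectX.lt_fst_of_pinLeft hk (isHorizP_reflectX.2 hq) (hright hp.reflectX)
    j hj hjk hcol' (pinLeft_reflectX.2 hR)

theorem vertical_placement (hp : IsGridPinSeq V H p N) (hk : k + 2 ≤ N)
    (hq : IsVertP (p k) (p (k+1)) (p (k+2))) (j : ℕ) (hj : 1 ≤ j) (hjk : j ≤ k + 1)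
    (hrow : SameRow H (p j).2 (p (k+2)).2) :
    (PinUp p j → (p j).2 < (p (k+2)).2) ∧ (PinDown p j → (p (k+2)).2 < (p j).2) :=
  (hp.swap.horizontal_placement hk (Or.symm hq) j hj hjk hrow).symm

end IsGridPinSeq

theorem pin_placement_general (V H : Set ℝ)
    (p : ℕ → ℝ × ℝ) (N : ℕ) (hp : IsGridPinSeq V H p N)
    (i : ℕ) (hi : 1 ≤ i) (hiN : i + 1 ≤ N) :
    ((IsLeftP (p (i-1)) (p i) (p (i+1)) ∨ IsRightP (p (i-1)) (p i) (p (i+1))) →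
      ∀ j, 1 ≤ j → j ≤ i → SameCol V (p j).1 (p (i+1)).1 →
        (PinLeft p j → (p (i+1)).1 < (p j).1) ∧
        (PinRight p j → (p j).1 < (p (i+1)).1)) ∧
    ((IsUpP (p (i-1)) (p i) (p (i+1)) ∨ IsDownP (p (i-1)) (p i) (p (i+1))) →
      ∀ j, 1 ≤ j → j ≤ i → SameRow H (p j).2 (p (i+1)).2 →
        (PinUp p j → (p j).2 < (p (i+1)).2) ∧
        (PinDown p j → (p (i+1)).2 < (p j).2)) := by
  obtain ⟨k, rfl⟩ : ∃ k, i = k + 1 := ⟨i - 1, by omega⟩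
  exact ⟨hp.horizontal_placement hiN, hp.vertical_placement hiN⟩

/-- **Lemma.**  If `p (i+1)` is a left pin, it lies further left than all
previous left pins in its column and to the right of all previous right pins
in its column; analogously for right, up and down pins. -/
theorem pin_placement (V H : Set ℝ) (hV : V.Finite) (hH : H.Finite)
    (p : ℕ → ℝ × ℝ) (N : ℕ) (hp : IsGridPinSeq V H p N)
    (i : ℕ) (hi : 1 ≤ i) (hiN : i + 1 ≤ N) :
    ((IsLeftP (p (i-1)) (p i) (p (i+1)) ∨ IsRightP (p (i-1)) (p i) (p (i+1))) →
      ∀ j, 1 ≤ j → j ≤ i → SameCol V (p j).1 (p (i+1)).1 →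
        (PinLeft p j → (p (i+1)).1 < (p j).1) ∧
        (PinRight p j → (p j).1 < (p (i+1)).1)) ∧
    ((IsUpP (p (i-1)) (p i) (p (i+1)) ∨ IsDownP (p (i-1)) (p i) (p (i+1))) →
      ∀ j, 1 ≤ j → j ≤ i → SameRow H (p j).2 (p (i+1)).2 →
        (PinUp p j → (p j).2 < (p (i+1)).2) ∧
        (PinDown p j → (p (i+1)).2 < (p j).2)) :=
  pin_placement_general V H p N hp i hi hiN
end
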